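/- The space of A_1 weights on ℝ (n = 1) with the metric d_* is not complete. Precisely: let (r_k)_{k∈ℕ} be any sequence in (−1, 0) with r_k → −1, and set w_k(x) = |x|^{r_k}. Then each w_k is an A_1 weight on ℝ; the sequence (log w_k) is Cauchy in the BMO norm (for every ε > 0 there is N with ‖log w_k − log w_m‖_* ≤ ε for all k, m ≥ N); yet there exists no A_1 weight w on ℝ such that ‖log w_k − log w‖_* → 0. -/

import Mathlib

open MeasureTheory Real Filter
open scoped ENNReal

noncomputable section

/-- A cube in `ℝⁿ`: a product of closed intervals of common positive side length. -/
def IsCube {n : ℕ} (Q : Set (Fin n → ℝ)) : Prop :=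
  ∃ (a : Fin n → ℝ) (h : ℝ), 0 < h ∧
    Q = Set.univ.pi fun i => Set.Icc (a i) (a i + h)

/-- The average `(1/|Q|) ∫_Q f dx`. -/
def cubeAvg {n : ℕ} (Q : Set (Fin n → ℝ)) (f : (Fin n → ℝ) → ℝ) : ℝ :=
  (volume Q).toReal⁻¹ * ∫ x in Q, f x

/-- The mean oscillation `(1/|Q|) ∫_Q |f - f_Q| dx` over a cube `Q`. -/
def bmoOsc {n : ℕ} (Q : Set (Fin n → ℝ)) (f : (Fin n → ℝ) → ℝ) : ℝ :=
  cubeAvg Q fun x => |f x - cubeAvg Q f|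

/-- `‖f‖_* ≤ C`, expressed cube-wise. -/
def BmoLe {n : ℕ} (f : (Fin n → ℝ) → ℝ) (C : ℝ) : Prop :=
  ∀ Q : Set (Fin n → ℝ), IsCube Q → bmoOsc Q f ≤ C

/-- The BMO norm `‖f‖_*` (as a supremum of mean oscillations over all cubes). -/
def bmoNorm {n : ℕ} (f : (Fin n → ℝ) → ℝ) : ℝ :=
  sSup {r : ℝ | ∃ Q : Set (Fin n → ℝ), IsCube Q ∧ r = bmoOsc Q f}

/-- A weight: a locally integrable function that is positive almost everywhere. -/
def IsWeight {n : ℕ} (w : (Fin n → ℝ) → ℝ) : Prop :=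
  LocallyIntegrable w volume ∧ ∀ᵐ x ∂(volume : Measure (Fin n → ℝ)), 0 < w x

/-- The `A_p` quantity of a weight over one cube:
`((1/|Q|)∫_Q w)((1/|Q|)∫_Q w^{1-p'})^{p-1}` where `p' = p/(p-1)`. -/
def apQ {n : ℕ} (p : ℝ) (Q : Set (Fin n → ℝ)) (w : (Fin n → ℝ) → ℝ) : ℝ :=
  cubeAvg Q w * (cubeAvg Q fun x => w x ^ (1 - p / (p - 1))) ^ (p - 1)

/-- `w` is an `A_p` weight: a weight with `w^{1-p'}` locally integrable and
uniformly bounded `A_p` quantities over all cubes. -/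
def IsApWeight {n : ℕ} (p : ℝ) (w : (Fin n → ℝ) → ℝ) : Prop :=
  IsWeight w ∧ LocallyIntegrable (fun x => w x ^ (1 - p / (p - 1))) volume ∧
    ∃ C : ℝ, ∀ Q : Set (Fin n → ℝ), IsCube Q → apQ p Q w ≤ C

/-- The `A_p` characteristic `[w]_{A_p}` (supremum over all cubes). -/
def apChar {n : ℕ} (p : ℝ) (w : (Fin n → ℝ) → ℝ) : ℝ :=
  sSup {r : ℝ | ∃ Q : Set (Fin n → ℝ), IsCube Q ∧ r = apQ p Q w}

/-- The weighted `p`-th power "norm" `∫ |f|^p w dx`, valued in `ℝ≥0∞`. -/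
def wNorm {n : ℕ} (p : ℝ) (w f : (Fin n → ℝ) → ℝ) : ℝ≥0∞ :=
  ∫⁻ x, ENNReal.ofReal (|f x| ^ p * w x)

/-- `C` is an admissible bound for `T : L^p(w) → L^p(w)`. -/
def IsOpBound {n : ℕ} (p : ℝ) (T : ((Fin n → ℝ) → ℝ) → (Fin n → ℝ) → ℝ)
    (w : (Fin n → ℝ) → ℝ) (C : ℝ) : Prop :=
  0 ≤ C ∧ ∀ f : (Fin n → ℝ) → ℝ, Measurable f → wNorm p w f < ⊤ →
    wNorm p w (T f) ≤ ENNReal.ofReal C ^ p * wNorm p w f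

/-- The operator norm `‖T‖_{L^p(w) → L^p(w)}`: the least admissible bound. -/
def opNorm {n : ℕ} (p : ℝ) (T : ((Fin n → ℝ) → ℝ) → (Fin n → ℝ) → ℝ)
    (w : (Fin n → ℝ) → ℝ) : ℝ :=
  sInf {C : ℝ | IsOpBound p T w C}

/-- The `A₁` quantity of a weight over one cube, valued in `ℝ≥0∞`. -/
def a1Q {n : ℕ} (Q : Set (Fin n → ℝ)) (w : (Fin n → ℝ) → ℝ) : ℝ≥0∞ :=
  ENNReal.ofReal (cubeAvg Q w) *
    essSup (fun x => ENNReal.ofReal (w x)⁻¹) (volume.restrict Q)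

/-- `w` is an `A₁` weight: a weight with uniformly bounded `A₁` quantities. -/
def IsA1Weight {n : ℕ} (w : (Fin n → ℝ) → ℝ) : Prop :=
  IsWeight w ∧ ∃ C : ℝ≥0∞, C ≠ ⊤ ∧ ∀ Q : Set (Fin n → ℝ), IsCube Q → a1Q Q w ≤ C

/-!
Since `log (|x| ^ r) = r * log |x|`, the whole problem is about multiples of `log |x|`, whose
mean oscillation over every interval is at most `8`; this makes `(log w_k)` Cauchy, and each
`|x| ^ r` with `-1 < r ≤ 0` is an `A₁` weight with constant `4 / (1 + r)`. If an `A₁` weight `w`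
were a limit, then `log w + log |x|` would have zero mean oscillation on `[-1, 1]`, forcing
`w = C / |x|` there, which is not integrable. The `A₁` condition bounds `w` below on cubes, which
makes `log w` integrable so that these oscillations are not junk values.
-/

open Set ProbabilityTheory

section MeanOscillation

variable {α : Type*} [MeasurableSpace α] {μ : Measure α} {f g : α → ℝ}

/-- Meant for probability measures, such as the normalized restriction `volume[|Q]` to a cube. -/
def meanOsc (μ : Measure α) (f : α → ℝ) : ℝ :=
  ∫ x, |f x - ∫ y, f y ∂μ| ∂μ

lemma meanOsc_nonneg (μ : Measure α) (f : α → ℝ) : 0 ≤ meanOsc μ f :=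
  integral_nonneg fun _ => abs_nonneg _

lemma meanOsc_const_mul (μ : Measure α) (c : ℝ) (f : α → ℝ) :
    meanOsc μ (fun x => c * f x) = |c| * meanOsc μ f := by
  simp only [meanOsc, integral_const_mul, ← mul_sub, abs_mul]

lemma meanOsc_add_le [IsFiniteMeasure μ] (hf : Integrable f μ) (hg : Integrable g μ) :
    meanOsc μ (fun x => f x + g x) ≤ meanOsc μ f + meanOsc μ g := by
  have hf' : Integrable (fun x => |f x - ∫ y, f y ∂μ|) μ := (hf.sub (integrable_const _)).abs
  have hg' : Integrable (fun x => |g x - ∫ y, g y ∂μ|) μ := (hg.sub (integrable_const _)).abs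
  rw [meanOsc, integral_add hf hg, meanOsc, meanOsc, ← integral_add hf' hg']
  refine integral_mono ((hf.add hg).sub (integrable_const _)).abs (hf'.add hg') fun x => ?_
  calc |f x + g x - (∫ y, f y ∂μ + ∫ y, g y ∂μ)|
      = |(f x - ∫ y, f y ∂μ) + (g x - ∫ y, g y ∂μ)| := by ring_nf
    _ ≤ _ := abs_add_le _ _

lemma meanOsc_le_two_mul [IsProbabilityMeasure μ] (hf : Integrable f μ) (c : ℝ) :
    meanOsc μ f ≤ 2 * ∫ x, |f x - c| ∂μ := by
  have hfc : Integrable (fun x => |f x - c|) μ := (hf.sub (integrable_const c)).abs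
  have hmean : |c - ∫ y, f y ∂μ| ≤ ∫ x, |f x - c| ∂μ := by
    calc |c - ∫ y, f y ∂μ| = |∫ x, (f x - c) ∂μ| := by
          rw [integral_sub hf (integrable_const c), integral_const, abs_sub_comm]; simp
      _ ≤ ∫ x, |f x - c| ∂μ := abs_integral_le_integral_abs
  calc meanOsc μ f ≤ ∫ x, (|f x - c| + |c - ∫ y, f y ∂μ|) ∂μ :=
        integral_mono (hf.sub (integrable_const _)).abs (hfc.add (integrable_const _))
          fun x => abs_sub_le _ _ _
    _ = (∫ x, |f x - c| ∂μ) + |c - ∫ y, f y ∂μ| := by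
        rw [integral_add hfc (integrable_const _), integral_const]; simp
    _ ≤ 2 * ∫ x, |f x - c| ∂μ := by linarith

lemma ae_eq_integral_of_meanOsc_eq_zero [IsFiniteMeasure μ] (hf : Integrable f μ)
    (h : meanOsc μ f = 0) : f =ᵐ[μ] fun _ => ∫ y, f y ∂μ := by
  have := (integral_eq_zero_iff_of_nonneg (fun x => abs_nonneg _)
    (hf.sub (integrable_const _)).abs).1 h
  filter_upwards [this] with x hx
  simpa [sub_eq_zero] using hx

lemma exists_ae_eq_of_tendsto_meanOsc [IsFiniteMeasure μ] (hf : Integrable f μ)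
    (hg : Integrable g μ) {r : ℕ → ℝ} {ρ : ℝ} (hr : Tendsto r atTop (nhds ρ))
    (hosc : ∀ ε > 0, ∃ N, ∀ k ≥ N, meanOsc μ (fun x => r k * f x - g x) ≤ ε) :
    ∃ c, ∀ᵐ x ∂μ, g x = ρ * f x + c := by
  have hsplit : ∀ k, meanOsc μ (fun x => g x - ρ * f x)
      ≤ meanOsc μ (fun x => r k * f x - g x) + |r k - ρ| * meanOsc μ f := fun k => by
    calc meanOsc μ (fun x => g x - ρ * f x)
        = meanOsc μ (fun x => -1 * (r k * f x - g x) + (r k - ρ) * f x) := by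
          congr 1; ext x; ring
      _ ≤ _ := meanOsc_add_le (((hf.const_mul _).sub hg).const_mul _) (hf.const_mul _)
      _ = _ := by rw [meanOsc_const_mul, meanOsc_const_mul, abs_neg, abs_one, one_mul]
  have hzero : meanOsc μ (fun x => g x - ρ * f x) = 0 := by
    refine le_antisymm (le_of_forall_pos_le_add fun ε hε => ?_) (meanOsc_nonneg _ _)
    obtain ⟨N, hN⟩ := hosc ε hε
    have hlim : Tendsto (fun k => ε + |r k - ρ| * meanOsc μ f) atTop (nhds (0 + ε)) := by
      rw [zero_add]
      simpa using tendsto_const_nhds.add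
        (((hr.sub_const ρ).abs.mul_const (meanOsc μ f)))
    exact ge_of_tendsto hlim (eventually_atTop.2 ⟨N, fun k hk => (hsplit k).trans
      (by linarith [hN k hk])⟩)
  refine ⟨∫ y, (g y - ρ * f y) ∂μ, ?_⟩
  filter_upwards [ae_eq_integral_of_meanOsc_eq_zero (hg.sub (hf.const_mul ρ)) hzero] with x hx
  simp only [Pi.sub_apply] at hx
  linarith

end MeanOscillation

section Transfer

variable {α β : Type*} [MeasurableSpace α] [MeasurableSpace β] {μ : Measure α} {ν : Measure β}

lemma MeasureTheory.MeasurePreserving.cond {f : α → β} (hf : MeasurePreserving f μ ν)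
    {s : Set β} (hs : MeasurableSet s) : MeasurePreserving f (μ[|f ⁻¹' s]) (ν[|s]) := by
  rw [ProbabilityTheory.cond, ProbabilityTheory.cond, hf.measure_preimage hs.nullMeasurableSet]
  exact (hf.restrict_preimage hs).smul_measure _

lemma MeasureTheory.MeasurePreserving.meanOsc_comp {e : α ≃ᵐ β} (he : MeasurePreserving e μ ν)
    (g : β → ℝ) : meanOsc μ (fun x => g (e x)) = meanOsc ν g := by
  simp only [meanOsc, he.integral_comp' (g := g),
    he.integral_comp' (g := fun y => |g y - ∫ z, g z ∂ν|)]

lemma integrable_cond_iff {s : Set α} (h0 : μ s ≠ 0) (hs : μ s ≠ ⊤) {f : α → ℝ} :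
    Integrable f (μ[|s]) ↔ IntegrableOn f s μ :=
  integrable_smul_measure (ENNReal.inv_ne_zero.2 hs) (ENNReal.inv_ne_top.2 h0)

end Transfer

lemma cubeAvg_eq_integral_cond {n : ℕ} (Q : Set (Fin n → ℝ)) (f : (Fin n → ℝ) → ℝ) :
    cubeAvg Q f = ∫ x, f x ∂volume[|Q] := by
  rw [cubeAvg, ProbabilityTheory.cond, integral_smul_measure, ENNReal.toReal_inv, smul_eq_mul]

lemma bmoOsc_eq_meanOsc {n : ℕ} (Q : Set (Fin n → ℝ)) (f : (Fin n → ℝ) → ℝ) :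
    bmoOsc Q f = meanOsc (volume[|Q]) f := by
  simp only [bmoOsc, meanOsc, cubeAvg_eq_integral_cond]

lemma integral_cond_Icc {a b : ℝ} (hab : a ≤ b) (f : ℝ → ℝ) :
    ∫ x, f x ∂volume[|Icc a b] = (b - a)⁻¹ * ∫ x in a..b, f x := by
  rw [ProbabilityTheory.cond, integral_smul_measure, Real.volume_Icc, ENNReal.toReal_inv,
    ENNReal.toReal_ofReal (sub_nonneg.2 hab), smul_eq_mul, integral_Icc_eq_integral_Ioc,
    intervalIntegral.integral_of_le hab]

section Cube

variable {n : ℕ} {Q : Set (Fin n → ℝ)}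

lemma IsCube.isCompact (hQ : IsCube Q) : IsCompact Q := by
  obtain ⟨a, h, -, rfl⟩ := hQ
  exact isCompact_univ_pi fun _ => isCompact_Icc

lemma IsCube.volume_ne_zero (hQ : IsCube Q) : volume Q ≠ 0 := by
  obtain ⟨a, h, hh, rfl⟩ := hQ
  rw [pi_univ_Icc, Real.volume_Icc_pi]
  simp [hh]

lemma IsCube.volume_ne_top (hQ : IsCube Q) : volume Q ≠ ⊤ :=
  hQ.isCompact.measure_lt_top.ne

lemma IsCube.isProbabilityMeasure_cond (hQ : IsCube Q) : IsProbabilityMeasure (volume[|Q]) :=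
  cond_isProbabilityMeasure_of_finite hQ.volume_ne_zero hQ.volume_ne_top

end Cube

lemma isCube_fin_one_iff {Q : Set (Fin 1 → ℝ)} :
    IsCube Q ↔ ∃ a h : ℝ, 0 < h ∧ Q = MeasurableEquiv.funUnique (Fin 1) ℝ ⁻¹' Icc a (a + h) := by
  constructor
  · rintro ⟨a, h, hh, rfl⟩
    refine ⟨a 0, h, hh, ?_⟩
    ext x
    simp only [mem_univ_pi, mem_preimage, Fin.forall_fin_one]
    rfl
  · rintro ⟨a, h, hh, rfl⟩
    refine ⟨fun _ => a, h, hh, ?_⟩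
    ext x
    simp only [mem_univ_pi, mem_preimage, Fin.forall_fin_one]
    rfl

lemma locallyIntegrable_norm_rpow {E : Type*} [NormedAddCommGroup E] [NormedSpace ℝ E]
    [FiniteDimensional ℝ E] [MeasurableSpace E] [BorelSpace E] {μ : Measure E}
    [μ.IsAddHaarMeasure] (hdim : 1 ≤ Module.finrank ℝ E) {r : ℝ}
    (hr : -(Module.finrank ℝ E : ℝ) < r) : LocallyIntegrable (fun x : E => ‖x‖ ^ r) μ :=
  locallyIntegrable_of_norm_le_rpow hdim (C := 1) (α := -r) (by linarith)
    (Eventually.of_forall fun x => by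
      rw [neg_neg, one_mul, norm_of_nonneg (rpow_nonneg (norm_nonneg x) r)])
    (continuous_norm.measurable.pow_const r).aestronglyMeasurable

lemma intervalIntegrable_abs_rpow {r : ℝ} (hr : -1 < r) (a b : ℝ) :
    IntervalIntegrable (fun x => |x| ^ r) volume a b := by
  have := locallyIntegrable_norm_rpow (E := ℝ) (μ := volume) (by simp) (by simpa using hr)
  simpa using (this.integrableOn_isCompact isCompact_uIcc).intervalIntegrable

lemma log_abs_rpow (x r : ℝ) : log (|x| ^ r) = r * log x := by
  rcases eq_or_ne x 0 with rfl | hx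
  · by_cases hr : r = 0 <;> simp [hr]
  · rw [log_rpow (abs_pos.2 hx), log_abs]

lemma max_abs_le_abs_add_of_mem_Icc {a h x : ℝ} (hx : x ∈ Icc a (a + h)) :
    max |a| |a + h| ≤ |x| + h := by
  have h₁ : |a - x| ≤ h := abs_sub_le_iff.2 ⟨by linarith [hx.1, hx.2], by linarith [hx.1, hx.2]⟩
  have h₂ : |a + h - x| ≤ h :=
    abs_sub_le_iff.2 ⟨by linarith [hx.1, hx.2], by linarith [hx.1, hx.2]⟩
  exact max_le (by linarith [abs_sub_abs_le_abs_sub a x])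
    (by linarith [abs_sub_abs_le_abs_sub (a + h) x])

lemma integral_comp_abs_neg_self {f : ℝ → ℝ} {M : ℝ} (hM : 0 ≤ M)
    (hf : IntervalIntegrable (fun x => f |x|) volume (-M) M) :
    ∫ x in -M..M, f |x| = 2 * ∫ x in 0..M, f x := by
  have hneg : ∫ x in -M..0, f |x| = ∫ x in 0..M, f |x| := by
    simpa using (intervalIntegral.integral_comp_neg (a := 0) (b := M) fun x => f |x|).symm
  have hpos : ∫ x in 0..M, f |x| = ∫ x in 0..M, f x :=
    intervalIntegral.integral_congr fun x hx => by
      rw [uIcc_of_le hM] at hx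
      rw [abs_of_nonneg hx.1]
  have h0 : (0 : ℝ) ∈ uIcc (-M) M := by rw [uIcc_of_le (by linarith)]; constructor <;> linarith
  rw [← intervalIntegral.integral_add_adjacent_intervals
    (hf.mono_set (uIcc_subset_uIcc_left h0))
    (hf.mono_set (uIcc_subset_uIcc_right h0)), hneg, hpos]
  ring

section IntervalBounds

variable {a h : ℝ}

lemma half_le_max_abs (hh : 0 < h) : h / 2 ≤ max |a| |a + h| := by
  have := abs_sub (a + h) a
  rw [add_sub_cancel_left, abs_of_pos hh] at this
  linarith [le_max_left |a| |a + h|, le_max_right |a| |a + h|]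

lemma integral_abs_rpow_le {r : ℝ} (hr₁ : -1 < r) (hr₀ : r ≤ 0) (hh : 0 < h) :
    ∫ x in a..a + h, |x| ^ r ≤ 4 / (1 + r) * h * max |a| |a + h| ^ r := by
  set M := max |a| |a + h|
  have hM : 0 < M := by linarith [half_le_max_abs (a := a) hh]
  have hr : 0 < 1 + r := by linarith
  have hMr : 0 < M ^ r := rpow_pos_of_pos hM r
  rcases le_or_gt M (2 * h) with hM2 | hM2
  · have hMa : -M ≤ a := by linarith [neg_abs_le a, le_max_left |a| |a + h|]
    have hMb : a + h ≤ M := by linarith [le_abs_self (a + h), le_max_right |a| |a + h|]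
    calc ∫ x in a..a + h, |x| ^ r ≤ ∫ x in -M..M, |x| ^ r :=
          intervalIntegral.integral_mono_interval hMa (by linarith) hMb
            (ae_of_all _ fun x => rpow_nonneg (abs_nonneg x) r)
            (intervalIntegrable_abs_rpow hr₁ _ _)
      _ = 2 / (1 + r) * M * M ^ r := by
          rw [integral_comp_abs_neg_self (f := fun x => x ^ r) hM.le
            (intervalIntegrable_abs_rpow hr₁ _ _), integral_rpow (Or.inl hr₁),
            zero_rpow (by linarith), rpow_add hM, rpow_one]
          ring
      _ ≤ 2 / (1 + r) * (2 * h) * M ^ r := by gcongr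
      _ = 4 / (1 + r) * h * M ^ r := by ring
  · have hbound : ∀ x ∈ Icc a (a + h), |x| ^ r ≤ 2 * M ^ r := fun x hx => by
      have hxM : M / 2 ≤ |x| := by linarith [max_abs_le_abs_add_of_mem_Icc hx]
      have htwo : (2⁻¹ : ℝ) ^ r ≤ 2 := by
        rw [inv_rpow zero_le_two, ← rpow_neg zero_le_two]
        simpa using rpow_le_rpow_of_exponent_le one_le_two (by linarith : -r ≤ 1)
      calc |x| ^ r ≤ (M / 2) ^ r := rpow_le_rpow_of_nonpos (by positivity) hxM hr₀
        _ = M ^ r * (2⁻¹) ^ r := by rw [div_eq_mul_inv, mul_rpow hM.le (by norm_num)]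
        _ ≤ 2 * M ^ r := by nlinarith
    calc ∫ x in a..a + h, |x| ^ r ≤ ∫ _ in a..a + h, 2 * M ^ r :=
          intervalIntegral.integral_mono_on (by linarith) (intervalIntegrable_abs_rpow hr₁ _ _)
            intervalIntegrable_const hbound
      _ = h * (2 * M ^ r) := by
          rw [intervalIntegral.integral_const, smul_eq_mul, add_sub_cancel_left]
      _ ≤ 4 / (1 + r) * h * M ^ r := by
          rw [div_mul_eq_mul_div, div_mul_eq_mul_div, le_div_iff₀ hr]
          nlinarith [mul_pos hh hMr]

lemma integral_abs_log_sub_log_le (hh : 0 < h) :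
    ∫ x in a..a + h, |log x - log (max |a| |a + h|)| ≤ 4 * h := by
  set M := max |a| |a + h|
  have hM : 0 < M := by linarith [half_le_max_abs (a := a) hh]
  have hint : ∀ c d, IntervalIntegrable (fun x => |log x - log M|) volume c d := fun c d =>
    (intervalIntegral.intervalIntegrable_log'.sub intervalIntegrable_const).abs
  rcases le_or_gt M (2 * h) with hM2 | hM2
  · have hMa : -M ≤ a := by linarith [neg_abs_le a, le_max_left |a| |a + h|]
    have hMb : a + h ≤ M := by linarith [le_abs_self (a + h), le_max_right |a| |a + h|]
    have hae : ∀ᵐ x, x ∈ uIoc (-M) M → |log x - log M| = log M - log x := by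
      filter_upwards [volume.ae_ne 0] with x hx0 hx
      rw [uIoc_of_le (by linarith)] at hx
      rw [abs_sub_comm, abs_of_nonneg (sub_nonneg.2 ?_)]
      rw [← log_abs]
      exact log_le_log (abs_pos.2 hx0) (abs_le.2 ⟨hx.1.le, hx.2⟩)
    calc ∫ x in a..a + h, |log x - log M| ≤ ∫ x in -M..M, |log x - log M| :=
          intervalIntegral.integral_mono_interval hMa (by linarith) hMb
            (ae_of_all _ fun x => abs_nonneg _) (hint _ _)
      _ = ∫ x in -M..M, (log M - log x) := intervalIntegral.integral_congr_ae hae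
      _ = 2 * M := by
          rw [intervalIntegral.integral_sub intervalIntegrable_const
            intervalIntegral.intervalIntegrable_log', integral_log, log_neg_eq_log]
          simp only [intervalIntegral.integral_const, sub_neg_eq_add, smul_eq_mul]
          ring
      _ ≤ 4 * h := by linarith
  · have hbound : ∀ x ∈ Icc a (a + h), |log x - log M| ≤ 1 := fun x hx => by
      have hxM : M / 2 ≤ |x| := by linarith [max_abs_le_abs_add_of_mem_Icc hx]
      have hx0 : 0 < |x| := by linarith
      rw [← log_abs, abs_sub_comm, ← log_div hM.ne' hx0.ne',
        abs_of_nonneg (log_nonneg ((one_le_div hx0).2 (abs_le_max_abs_abs hx.1 hx.2)))]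
      calc log (M / |x|) ≤ M / |x| - 1 := log_le_sub_one_of_pos (by positivity)
        _ ≤ 1 := by rw [sub_le_iff_le_add, div_le_iff₀ hx0]; linarith
    calc ∫ x in a..a + h, |log x - log M| ≤ ∫ _ in a..a + h, (1 : ℝ) :=
          intervalIntegral.integral_mono_on (by linarith) (hint _ _) intervalIntegrable_const
            hbound
      _ ≤ 4 * h := by
          rw [intervalIntegral.integral_const, smul_eq_mul, add_sub_cancel_left]; linarith

lemma meanOsc_log_cond_Icc_le (hh : 0 < h) : meanOsc (volume[|Icc a (a + h)]) log ≤ 8 := by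
  have hvol : volume (Icc a (a + h)) ≠ 0 := by simp [hh]
  have := cond_isProbabilityMeasure_of_finite hvol measure_Icc_lt_top.ne
  have hlog : Integrable log (volume[|Icc a (a + h)]) :=
    (integrable_cond_iff hvol measure_Icc_lt_top.ne).2
      ((intervalIntegrable_iff_integrableOn_Icc_of_le (by linarith)).1
        intervalIntegral.intervalIntegrable_log')
  calc meanOsc (volume[|Icc a (a + h)]) log
      ≤ 2 * ∫ x, |log x - log (max |a| |a + h|)| ∂volume[|Icc a (a + h)] :=
        meanOsc_le_two_mul hlog _
    _ ≤ 2 * (h⁻¹ * (4 * h)) := by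
        rw [integral_cond_Icc (by linarith), add_sub_cancel_left]
        gcongr
        exact integral_abs_log_sub_log_le hh
    _ = 8 := by field_simp; norm_num

end IntervalBounds

lemma MeasureTheory.Integrable.log_of_le {α : Type*} [MeasurableSpace α] {μ : Measure α}
    [IsFiniteMeasure μ] {f : α → ℝ} (hf : Integrable f μ) {δ : ℝ} (hδ : 0 < δ)
    (h : ∀ᵐ x ∂μ, δ ≤ f x) : Integrable (fun x => log (f x)) μ := by
  refine (hf.abs.add (integrable_const |log δ|)).mono'
    (measurable_log.comp_aemeasurable hf.aemeasurable).aestronglyMeasurable ?_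
  filter_upwards [h] with x hx
  rw [norm_eq_abs, abs_le, Pi.add_apply]
  constructor
  · linarith [log_le_log hδ hx, neg_abs_le (log δ), abs_nonneg (f x)]
  · linarith [log_le_self (hδ.le.trans hx), le_abs_self (f x), abs_nonneg (log δ)]

lemma IsA1Weight.exists_pos_le {n : ℕ} {w : (Fin n → ℝ) → ℝ} (hw : IsA1Weight w)
    {Q : Set (Fin n → ℝ)} (hQ : IsCube Q) : ∃ δ > 0, ∀ᵐ x ∂volume.restrict Q, δ ≤ w x := by
  obtain ⟨⟨hloc, hpos⟩, C, hC, hCQ⟩ := hw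
  have := hQ.isProbabilityMeasure_cond
  have hposQ : ∀ᵐ x ∂volume[|Q], 0 < w x := cond_absolutelyContinuous.ae_le hpos
  have havg : 0 < cubeAvg Q w := by
    rw [cubeAvg_eq_integral_cond]
    refine (integral_nonneg_of_ae (hposQ.mono fun x hx => hx.le)).lt_of_ne fun h0 => ?_
    obtain ⟨x, hx0, hx⟩ := (hposQ.and ((integral_eq_zero_iff_of_nonneg_ae
      (hposQ.mono fun x hx => hx.le) ((integrable_cond_iff hQ.volume_ne_zero
        hQ.volume_ne_top).2 (hloc.integrableOn_isCompact hQ.isCompact))).1 h0.symm)).exists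
    exact hx0.ne' hx
  set K := essSup (fun x => ENNReal.ofReal (w x)⁻¹) (volume.restrict Q)
  have hK : K ≠ ⊤ := fun htop => by
    have : ENNReal.ofReal (cubeAvg Q w) * K ≤ C := hCQ Q hQ
    rw [htop, ENNReal.mul_top (ENNReal.ofReal_pos.2 havg).ne'] at this
    exact hC (top_le_iff.1 this)
  refine ⟨(K.toReal + 1)⁻¹, by positivity, ?_⟩
  filter_upwards [ENNReal.ae_le_essSup fun x => ENNReal.ofReal (w x)⁻¹,
    ae_restrict_of_ae hpos] with x hxK hx
  have : (w x)⁻¹ ≤ K.toReal := (ENNReal.ofReal_le_iff_le_toReal hK).1 hxK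
  exact inv_le_of_inv_le₀ hx (by linarith)

section FinOne

local notation "e₁" => MeasurableEquiv.funUnique (Fin 1) ℝ

lemma measurePreserving_funUnique_cond {s : Set ℝ} (hs : MeasurableSet s) :
    MeasurePreserving e₁ (volume[|e₁ ⁻¹' s]) (volume[|s]) :=
  (volume_preserving_funUnique (Fin 1) ℝ).cond hs

lemma meanOsc_cond_log_le {Q : Set (Fin 1 → ℝ)} (hQ : IsCube Q) :
    meanOsc (volume[|Q]) (fun x => log (x 0)) ≤ 8 := by
  obtain ⟨a, h, hh, rfl⟩ := isCube_fin_one_iff.1 hQ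
  exact ((measurePreserving_funUnique_cond measurableSet_Icc).meanOsc_comp log).trans_le
    (meanOsc_log_cond_Icc_le hh)

lemma bmoLe_log_abs_rpow_sub (s t : ℝ) :
    BmoLe (fun x : Fin 1 → ℝ => log (|x 0| ^ s) - log (|x 0| ^ t)) (8 * |s - t|) := by
  intro Q hQ
  simp only [bmoOsc_eq_meanOsc, log_abs_rpow, ← sub_mul]
  rw [meanOsc_const_mul, mul_comm 8]
  exact mul_le_mul_of_nonneg_left (meanOsc_cond_log_le hQ) (abs_nonneg _)

lemma isA1Weight_abs_rpow {r : ℝ} (hr₁ : -1 < r) (hr₀ : r ≤ 0) :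
    IsA1Weight (fun x : Fin 1 → ℝ => |x 0| ^ r) := by
  have hnorm : ∀ x : Fin 1 → ℝ, ‖x‖ = |x 0| := fun x => by simp [Pi.norm_def]
  refine ⟨⟨?_, ?_⟩, ENNReal.ofReal (4 / (1 + r)), ENNReal.ofReal_ne_top, fun Q hQ => ?_⟩
  · simpa only [hnorm] using
      locallyIntegrable_norm_rpow (E := Fin 1 → ℝ) (μ := volume) (by simp) (by simpa using hr₁)
  · filter_upwards [(volume_preserving_funUnique (Fin 1) ℝ).quasiMeasurePreserving.ae
      (volume.ae_ne 0)] with x hx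
    exact rpow_pos_of_pos (abs_pos.2 hx) r
  obtain ⟨a, h, hh, rfl⟩ := isCube_fin_one_iff.1 hQ
  set M := max |a| |a + h|
  have hM : 0 < M := by linarith [half_le_max_abs (a := a) hh]
  have hr : 0 < 1 + r := by linarith
  have havg : cubeAvg (e₁ ⁻¹' Icc a (a + h)) (fun x => |x 0| ^ r) ≤ 4 / (1 + r) * M ^ r := by
    calc cubeAvg (e₁ ⁻¹' Icc a (a + h)) (fun x => |x 0| ^ r)
        = ∫ y, |y| ^ r ∂volume[|Icc a (a + h)] := by
          rw [cubeAvg_eq_integral_cond]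
          exact (measurePreserving_funUnique_cond measurableSet_Icc).integral_comp'
            (g := fun y => |y| ^ r)
      _ = h⁻¹ * ∫ x in a..a + h, |x| ^ r := by
          rw [integral_cond_Icc (by linarith), add_sub_cancel_left]
      _ ≤ h⁻¹ * (4 / (1 + r) * h * M ^ r) :=
          mul_le_mul_of_nonneg_left (integral_abs_rpow_le hr₁ hr₀ hh) (by positivity)
      _ = 4 / (1 + r) * M ^ r := by field_simp
  have hess : essSup (fun x => ENNReal.ofReal (|x 0| ^ r)⁻¹)
      (volume.restrict (e₁ ⁻¹' Icc a (a + h))) ≤ ENNReal.ofReal (M ^ (-r)) := by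
    refine essSup_le_of_ae_le _ ?_
    filter_upwards [ae_restrict_mem (measurableSet_Icc.preimage (measurable_pi_apply 0))]
      with x hx
    rw [← rpow_neg (abs_nonneg _)]
    exact ENNReal.ofReal_le_ofReal
      (rpow_le_rpow (abs_nonneg _) (abs_le_max_abs_abs hx.1 hx.2) (by linarith))
  calc a1Q (e₁ ⁻¹' Icc a (a + h)) (fun x => |x 0| ^ r)
      ≤ ENNReal.ofReal (4 / (1 + r) * M ^ r) * ENNReal.ofReal (M ^ (-r)) :=
        mul_le_mul' (ENNReal.ofReal_le_ofReal havg) hess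
    _ = ENNReal.ofReal (4 / (1 + r)) := by
        rw [← ENNReal.ofReal_mul (by positivity), mul_assoc,
          ← rpow_add hM, add_neg_cancel, rpow_zero, mul_one]

end FinOne

lemma not_exists_isA1Weight_bmo_limit {r : ℕ → ℝ} (hr : Tendsto r atTop (nhds (-1))) :
    ¬ ∃ w : (Fin 1 → ℝ) → ℝ, IsA1Weight w ∧ ∀ ε : ℝ, 0 < ε → ∃ N : ℕ, ∀ k ≥ N,
      BmoLe (fun x : Fin 1 → ℝ => log (|x 0| ^ r k) - log (w x)) ε := by
  rintro ⟨w, hw, hconv⟩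
  set I : Set ℝ := Icc (-1) 1
  set Q : Set (Fin 1 → ℝ) := MeasurableEquiv.funUnique (Fin 1) ℝ ⁻¹' I
  have hQ : IsCube Q := isCube_fin_one_iff.2 ⟨-1, 2, two_pos, by norm_num [Q, I]⟩
  have := hQ.isProbabilityMeasure_cond
  have hI := measurePreserving_funUnique_cond (measurableSet_Icc : MeasurableSet I)
  have hvolI : volume I ≠ 0 := by simp [I]
  obtain ⟨δ, hδ, hδw⟩ := hw.exists_pos_le hQ
  have hwQ : Integrable w (volume[|Q]) :=
    (integrable_cond_iff hQ.volume_ne_zero hQ.volume_ne_top).2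
      (hw.1.1.integrableOn_isCompact hQ.isCompact)
  have hlogw : Integrable (fun x => log (w x)) (volume[|Q]) :=
    hwQ.log_of_le hδ (Measure.ae_smul_measure hδw _)
  have hlog : Integrable (fun x : Fin 1 → ℝ => log (x 0)) (volume[|Q]) :=
    (hI.integrable_comp_emb (MeasurableEquiv.measurableEmbedding _) (g := log)).2
      ((integrable_cond_iff hvolI measure_Icc_lt_top.ne).2
        ((intervalIntegrable_iff_integrableOn_Icc_of_le (by norm_num)).1
          intervalIntegral.intervalIntegrable_log'))
  obtain ⟨c, hc⟩ := exists_ae_eq_of_tendsto_meanOsc hlog hlogw hr fun ε hε => by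
    obtain ⟨N, hN⟩ := hconv ε hε
    refine ⟨N, fun k hk => ?_⟩
    simpa only [bmoOsc_eq_meanOsc, log_abs_rpow] using hN k hk Q hQ
  have hinv : Integrable (fun x : Fin 1 → ℝ => (x 0)⁻¹) (volume[|Q]) := by
    refine (hwQ.const_mul (exp (-c))).mono'
      ((measurable_pi_apply 0).inv.aestronglyMeasurable) ?_
    filter_upwards [hc, cond_absolutelyContinuous.ae_le hw.1.2] with x hcx hwx
    rcases eq_or_ne (x 0) 0 with h0 | h0
    · rw [h0, inv_zero, norm_zero]; positivity
    · refine le_of_eq ?_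
      calc ‖(x 0)⁻¹‖ = exp (-log (x 0)) := by
            rw [norm_inv, norm_eq_abs, exp_neg, ← log_abs, exp_log (abs_pos.2 h0)]
        _ = exp (-c) * w x := by
            rw [← exp_log hwx, hcx, ← exp_add]
            ring_nf
  have := (hI.integrable_comp_emb (MeasurableEquiv.measurableEmbedding _) (g := fun y => y⁻¹)).1
    hinv
  rw [integrable_cond_iff hvolI measure_Icc_lt_top.ne,
    ← intervalIntegrable_iff_integrableOn_Icc_of_le (by norm_num)] at this
  norm_num at this

/-- `(𝓐₁, d_*)` on `ℝ` is not complete: for any sequence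
`r_k ∈ (-1,0)` with `r_k → -1`, the weights `w_k(x) = |x|^{r_k}` are `A₁`, the sequence
`(log w_k)` is `d_*`-Cauchy, but no `A₁` weight is a `d_*`-limit of `(w_k)`. -/
theorem A1_not_complete (r : ℕ → ℝ)
    (hr : ∀ k, r k ∈ Set.Ioo (-1 : ℝ) 0)
    (hrlim : Filter.Tendsto r Filter.atTop (nhds (-1 : ℝ))) :
    (∀ k, IsA1Weight (fun x : Fin 1 → ℝ => |x 0| ^ r k)) ∧
    (∀ ε : ℝ, 0 < ε → ∃ N : ℕ, ∀ k ≥ N, ∀ m ≥ N,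
      BmoLe (fun x : Fin 1 → ℝ =>
        Real.log (|x 0| ^ r k) - Real.log (|x 0| ^ r m)) ε) ∧
    ¬ ∃ w : (Fin 1 → ℝ) → ℝ, IsA1Weight w ∧
        ∀ ε : ℝ, 0 < ε → ∃ N : ℕ, ∀ k ≥ N,
          BmoLe (fun x : Fin 1 → ℝ =>
            Real.log (|x 0| ^ r k) - Real.log (w x)) ε := by
  refine ⟨fun k => isA1Weight_abs_rpow (hr k).1 (hr k).2.le, fun ε hε => ?_,
    not_exists_isA1Weight_bmo_limit hrlim⟩
  obtain ⟨N, hN⟩ := Metric.cauchySeq_iff.1 hrlim.cauchySeq (ε / 8) (by positivity)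
  refine ⟨N, fun k hk m hm Q hQ => (bmoLe_log_abs_rpow_sub (r k) (r m) Q hQ).trans ?_⟩
  have := hN k hk m hm
  rw [Real.dist_eq] at this
  linarith
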